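/- Let μ = Σ_{λ∈Λ} p(λ) δ_λ, with p(λ) ∈ ℂ, be an almost periodic measure on ℝ^d with uniformly discrete support Λ. Then the measure |μ| = Σ_{λ∈Λ} |p(λ)| δ_λ is almost periodic. -/

import Mathlib

open Complex SchwartzMap Metric Set MeasureTheory
open scoped ContDiff ENNReal Pointwise Real

noncomputable section

/-- Euclidean space `ℝ^d`. -/
abbrev Ed (d : ℕ) : Type := EuclideanSpace ℝ (Fin d)

/-- Temperate distributions: continuous linear functionals on the Schwartz space. -/
abbrev TempDist (d : ℕ) : Type := 𝓢(Ed d, ℂ) →L[ℂ] ℂ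

namespace Paper

variable {d : ℕ}

/-- A set is locally finite if its intersection with every ball is finite. -/
def IsLocallyFinite (A : Set (Ed d)) : Prop :=
  ∀ (x : Ed d) (r : ℝ), (A ∩ Metric.ball x r).Finite

/-- The separating constant `η(A) = inf {|x - x'| : x, x' ∈ A, x ≠ x'}`
(as an extended real, so that `η(A) = ∞` when `A` has at most one point). -/
def eta (A : Set (Ed d)) : ℝ≥0∞ :=
  ⨅ (x : A) (y : A) (_ : (x : Ed d) ≠ (y : Ed d)), edist (x : Ed d) (y : Ed d)

/-- A set is uniformly discrete if it is locally finite and `η(A) > 0`. -/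
def IsUniformlyDiscrete (A : Set (Ed d)) : Prop :=
  IsLocallyFinite A ∧ 0 < eta A

/-- A locally finite set is of bounded density if `sup_x #(A ∩ B(x,1)) < ∞`. -/
def HasBoundedDensity (A : Set (Ed d)) : Prop :=
  ∃ C : ℕ, ∀ x : Ed d, (A ∩ Metric.ball x 1).Finite ∧ (A ∩ Metric.ball x 1).ncard ≤ C

/-- A full-rank lattice in `ℝ^d`: the image of `ℤ^d` under an invertible linear operator,
equivalently the integer span of a basis. -/
def IsFullRankLattice (L : Set (Ed d)) : Prop :=
  ∃ b : Module.Basis (Fin d) ℝ (Ed d),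
    L = Set.range (fun n : Fin d → ℤ => ∑ i : Fin d, (n i : ℝ) • b i)

/-- The support of a temperate distribution: `x` is in the support iff `f` does not
vanish near `x`, i.e. for every open `U ∋ x` there is a test function supported
in `U` on which `f` is nonzero. -/
def distSupport (f : TempDist d) : Set (Ed d) :=
  {x | ∀ U : Set (Ed d), IsOpen U → x ∈ U →
     ∃ φ : 𝓢(Ed d, ℂ), tsupport (⇑φ) ⊆ U ∧ f φ ≠ 0}

/-- The Fourier transform of a temperate distribution, `f̂(φ) = f(φ̂)`. -/
def fourierT (f : TempDist d) : TempDist d :=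
  f.comp (fourierTransformCLM ℂ)

/-- The spectrum of a temperate distribution: the support of its Fourier transform. -/
def spectrumOf (f : TempDist d) : Set (Ed d) := distSupport (fourierT f)

/-- The partial derivative `∂/∂x_i` of a function on `ℝ^d`. -/
def pderiv1 (i : Fin d) (φ : Ed d → ℂ) : Ed d → ℂ :=
  fun x => fderiv ℝ φ x (EuclideanSpace.single i 1)

/-- The multi-index partial derivative `D^k = ∂^{k₁}_{x₁} ⋯ ∂^{k_d}_{x_d}`. -/
def multiDeriv (k : Fin d → ℕ) (φ : Ed d → ℂ) : Ed d → ℂ :=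
  ((List.ofFn fun i : Fin d => (pderiv1 i)^[k i]).foldr (· ∘ ·) id) φ

/-- The action of `D^k δ_λ` on a test function: `(D^k δ_λ)(φ) = (-1)^{‖k‖} (D^k φ)(λ)`. -/
def diracTerm (k : Fin d → ℕ) (l : Ed d) (φ : 𝓢(Ed d, ℂ)) : ℂ :=
  (-1 : ℂ) ^ (∑ i : Fin d, k i) * multiDeriv k (⇑φ) l

/-- `f = Σ_{λ∈Λ} Σ_k p_k(λ) D^k δ_λ`, with the inner sum finite for each `λ`. -/
def HasRep (f : TempDist d) (Λ : Set (Ed d)) (p : Ed d → (Fin d → ℕ) → ℂ) : Prop :=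
  (∀ l : Ed d, l ∉ Λ → ∀ k, p l k = 0) ∧
  (∀ l : Ed d, {k : Fin d → ℕ | p l k ≠ 0}.Finite) ∧
  (∀ φ : 𝓢(Ed d, ℂ),
    HasSum (fun l : Λ => ∑' k : Fin d → ℕ, p (l : Ed d) k * diracTerm k (l : Ed d) φ) (f φ))

/-- A relatively dense subset of a pseudometric space. -/
def RelDense {X : Type*} [PseudoMetricSpace X] (T : Set X) : Prop :=
  ∃ R : ℝ, 0 < R ∧ ∀ x : X, ∃ τ ∈ T, dist x τ ≤ R

/-- Bohr almost periodic function (with values in `ℂ`): for every `ε > 0` the set of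
`ε`-almost periods is relatively dense. -/
def APFun {V : Type*} [SeminormedAddCommGroup V] (g : V → ℂ) : Prop :=
  Continuous g ∧ ∀ ε : ℝ, 0 < ε →
    RelDense {τ : V | ∀ t : V, ‖g (t + τ) - g t‖ < ε}

/-- Almost periodicity of the purely point measure `μ = Σ_{λ∈Λ} p(λ) δ_λ`:
for every `C^∞` function `φ` with compact support, the function
`t ↦ (μ(y), φ(t−y)) = Σ_{λ∈Λ} p(λ) φ(t−λ)` is almost periodic. -/
def APMeasure (Λ : Set (Ed d)) (p : Ed d → ℂ) : Prop :=
  ∀ φ : Ed d → ℂ, ContDiff ℝ ∞ φ → HasCompactSupport φ →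
    APFun (fun t : Ed d => ∑' l : Λ, p (l : Ed d) * φ (t - (l : Ed d)))

/-- `Λ` is contained in a finite union of translates of (several) full-rank lattices. -/
def SubsetFiniteUnionOfTranslates (Λ : Set (Ed d)) : Prop :=
  ∃ (J : ℕ) (L : Fin J → Set (Ed d)) (v : Fin J → Ed d),
    (∀ j, IsFullRankLattice (L j)) ∧
    Λ ⊆ ⋃ j : Fin J, (fun x => v j + x) '' (L j)

/-- `Λ` is a finite union of translates of (several) full-rank lattices. -/
def EqFiniteUnionOfTranslates (Λ : Set (Ed d)) : Prop :=
  ∃ (J : ℕ) (L : Fin J → Set (Ed d)) (v : Fin J → Ed d),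
    (∀ j, IsFullRankLattice (L j)) ∧
    Λ = ⋃ j : Fin J, (fun x => v j + x) '' (L j)

end Paper

open Paper
open scoped RealInnerProductSpace

/-!
Let `r > 0` separate the points of `Λ` and let `ψ` be a bump with `ψ 0 = 1`, `0 ≤ ψ ≤ 1`,
supported in the ball of radius `ρ ≤ r / 2`. Then `μ * ψ` equals `p(λ)` at `λ ∈ Λ`, has modulus at
most `|p(λ)|` within `ρ` of `λ`, and vanishes farther than `ρ` from `Λ`. Hence an `ε`-almost period
`τ` of `μ * ψ` moves each `λ ∈ Λ` to within `ρ` of a partner `λ' ∈ Λ` with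
`||p(λ')| - |p(λ)|| ≤ ε`, unless `|p(λ)| ≤ ε`; by the symmetry `τ ↦ -τ` the same holds backwards.
Pairing the terms of `|μ| * φ (t + τ)` and `|μ| * φ t` along this partial matching, and counting
the points of `Λ` in a ball by a volume argument, shows that `τ` is a small almost period of
`|μ| * φ`, with error controlled by `ε` and the oscillation of `φ` on scale `ρ`.
-/

namespace Paper

theorem RelDense.mono {X : Type*} [PseudoMetricSpace X] {T T' : Set X} (hT : RelDense T)
    (h : T ⊆ T') : RelDense T' := by
  obtain ⟨R, hR, hx⟩ := hT
  exact ⟨R, hR, fun x => (hx x).imp fun _ hτ => ⟨h hτ.1, hτ.2⟩⟩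

theorem APFun.exists_norm_le {V : Type*} [NormedAddCommGroup V] [ProperSpace V] {g : V → ℂ}
    (hg : APFun g) : ∃ B, ∀ t, ‖g t‖ ≤ B := by
  obtain ⟨R, -, hR⟩ := hg.2 1 one_pos
  obtain ⟨C, hC⟩ :=
    (isCompact_closedBall (0 : V) R).exists_bound_of_continuousOn hg.1.continuousOn
  refine ⟨C + 1, fun t => ?_⟩
  obtain ⟨τ, hτ, hdist⟩ := hR t
  have hshift : ‖g t - g (t - τ)‖ < 1 := by simpa using hτ (t - τ)
  have hbase : ‖g (t - τ)‖ ≤ C := hC _ (by rwa [mem_closedBall_zero_iff, ← dist_eq_norm])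
  linarith [norm_le_insert' (g t) (g (t - τ))]

theorem IsUniformlyDiscrete.exists_separated {d : ℕ} {Λ : Set (Ed d)}
    (hΛ : IsUniformlyDiscrete Λ) : ∃ r > 0, ∀ x y : Λ, x ≠ y → r ≤ dist (x : Ed d) y := by
  obtain ⟨r, -, hr, hrη⟩ := ENNReal.lt_iff_exists_real_btwn.mp hΛ.2
  refine ⟨r, ENNReal.ofReal_pos.mp hr, fun x y hxy => ?_⟩
  have hη : eta Λ ≤ edist (x : Ed d) y :=
    (iInf_le _ x).trans <| (iInf_le _ y).trans <| iInf_le _ (Subtype.coe_injective.ne hxy)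
  rw [edist_dist] at hη
  exact (ENNReal.ofReal_le_ofReal_iff dist_nonneg).mp (hrη.trans_le hη).le

section FiniteDimensional

variable {E : Type*} [NormedAddCommGroup E] [NormedSpace ℝ E] [FiniteDimensional ℝ E]

/-- Packing bound: the disjoint balls of radius `r / 2` around the points fit into one ball. -/
theorem exists_card_le_of_separated {Λ : Set E} {r : ℝ} (hr : 0 < r)
    (hsep : ∀ x y : Λ, x ≠ y → r ≤ dist (x : E) y) (R : ℝ) :
    ∃ N : ℕ, ∀ (c : E) (s : Finset Λ), (∀ x ∈ s, dist (x : E) c < R) → s.card ≤ N := by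
  borelize E
  let μ : Measure E := Measure.addHaar
  have hv : μ (ball 0 (r / 2)) ≠ 0 := (measure_ball_pos μ _ (half_pos hr)).ne'
  have hV : μ (ball 0 (R + r / 2)) ≠ ⊤ := measure_ball_lt_top.ne
  refine ⟨⌈(μ (ball 0 (R + r / 2)) / μ (ball 0 (r / 2))).toReal⌉₊, fun c s hs => ?_⟩
  have hdisj : (s : Set Λ).PairwiseDisjoint fun x => ball (x : E) (r / 2) :=
    fun x _ y _ hxy => ball_disjoint_ball (by linarith [hsep x y hxy])
  have hcover : (⋃ x ∈ s, ball (x : E) (r / 2)) ⊆ ball c (R + r / 2) := by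
    simp only [iUnion_subset_iff]
    intro x hx z hz
    rw [mem_ball] at hz ⊢
    linarith [dist_triangle z x c, hs x hx]
  have hmass : (s.card : ℝ≥0∞) * μ (ball 0 (r / 2)) ≤ μ (ball 0 (R + r / 2)) :=
    calc (s.card : ℝ≥0∞) * μ (ball 0 (r / 2)) = ∑ x ∈ s, μ (ball (x : E) (r / 2)) := by
          simp [Measure.addHaar_ball_center]
      _ = μ (⋃ x ∈ s, ball (x : E) (r / 2)) :=
          (measure_biUnion_finset hdisj fun _ _ => measurableSet_ball).symm
      _ ≤ μ (ball c (R + r / 2)) := measure_mono hcover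
      _ = μ (ball 0 (R + r / 2)) := Measure.addHaar_ball_center μ c _
  have hcard := ENNReal.toReal_mono (ENNReal.div_lt_top hV hv).ne
    ((ENNReal.le_div_iff_mul_le (Or.inl hv) (Or.inr hV)).mpr hmass)
  exact_mod_cast (by simpa using hcard : (s.card : ℝ) ≤ _).trans (Nat.le_ceil _)

variable [HasContDiffBump E]

theorem exists_complex_bump {ρ : ℝ} (hρ : 0 < ρ) :
    ∃ ψ : E → ℂ, ContDiff ℝ ∞ ψ ∧ HasCompactSupport ψ ∧ ψ 0 = 1 ∧ (∀ v, ‖ψ v‖ ≤ 1) ∧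
      ∀ v, ρ ≤ ‖v‖ → ψ v = 0 := by
  let b : ContDiffBump (0 : E) := ⟨ρ / 2, ρ, half_pos hρ, half_lt_self hρ⟩
  refine ⟨fun v => (b v : ℂ), ofRealCLM.contDiff.comp b.contDiff,
    b.hasCompactSupport.comp_left ofReal_zero, ?_, fun v => ?_, fun v hv => ?_⟩
  · simp [b.one_of_mem_closedBall (mem_closedBall_self (half_pos hρ).le)]
  · simpa [abs_of_nonneg b.nonneg] using b.le_one
  · simp [b.zero_of_le_dist (by simpa using hv)]

end FiniteDimensional

section DiscreteConv

variable {E : Type*} [NormedAddCommGroup E] {Λ : Set E} {q φ : E → ℂ} {M : ℝ}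

/-- The convolution `μ * φ` of `μ = Σ_{λ ∈ Λ} q(λ) δ_λ` with `φ`. -/
def discreteConv (Λ : Set E) (q φ : E → ℂ) (t : E) : ℂ :=
  ∑' l : Λ, q l * φ (t - l)

theorem exists_finset_iff_dist_lt (hfin : ∀ c R, (Λ ∩ ball c R).Finite) (c : E) (R : ℝ) :
    ∃ A : Finset Λ, ∀ x : Λ, x ∈ A ↔ dist (x : E) c < R :=
  ⟨((hfin c R).preimage Subtype.val_injective.injOn).toFinset, fun x => by simp⟩

theorem dist_lt_of_ne_zero (hφ : ∀ v, M ≤ ‖v‖ → φ v = 0) {t x : E} (hx : φ (t - x) ≠ 0) :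
    dist x t < M := by
  rw [dist_comm, dist_eq_norm]
  exact lt_of_not_ge (mt (hφ _) hx)

theorem discreteConv_eq_sum (hφ : ∀ v, M ≤ ‖v‖ → φ v = 0) {t : E} (A : Finset Λ)
    (hA : ∀ x : Λ, dist (x : E) t < M → x ∈ A) :
    discreteConv Λ q φ t = ∑ x ∈ A, q x * φ (t - x) :=
  tsum_eq_sum fun x hx => by
    rw [of_not_not fun h => hx (hA x (dist_lt_of_ne_zero hφ h)), mul_zero]

theorem continuous_discreteConv (hfin : ∀ c R, (Λ ∩ ball c R).Finite) (hφc : Continuous φ)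
    (hφ : ∀ v, M ≤ ‖v‖ → φ v = 0) : Continuous (discreteConv Λ q φ) := by
  refine continuous_iff_continuousAt.2 fun t₀ => ?_
  obtain ⟨A, hA⟩ := exists_finset_iff_dist_lt hfin t₀ (M + 1)
  have hsum : ∀ t ∈ ball t₀ 1, ∑ x ∈ A, q x * φ (t - x) = discreteConv Λ q φ t :=
    fun t ht => (discreteConv_eq_sum hφ A fun x hx => (hA x).2 <| by
      linarith [dist_triangle (x : E) t t₀, mem_ball.1 ht]).symm
  exact (continuous_finsetSum A fun x _ =>
    continuous_const.mul (hφc.comp (continuous_sub_right _))).continuousAt.congr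
      (Filter.eventuallyEq_of_mem (ball_mem_nhds t₀ one_pos) hsum)

end DiscreteConv

section Separated

variable {E : Type*} [NormedAddCommGroup E] {Λ : Set E} {q ψ : E → ℂ} {r ρ : ℝ}

theorem eq_of_dist_lt_of_dist_lt (hsep : ∀ x y : Λ, x ≠ y → r ≤ dist (x : E) y)
    (hρr : 2 * ρ ≤ r) {x y : Λ} {c : E} (hx : dist (x : E) c < ρ) (hy : dist (y : E) c < ρ) :
    x = y := by
  by_contra hxy
  linarith [hsep x y hxy, dist_triangle_right (x : E) y c]

theorem discreteConv_eq_of_dist_lt (hsep : ∀ x y : Λ, x ≠ y → r ≤ dist (x : E) y)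
    (hρr : 2 * ρ ≤ r) (hψ : ∀ v, ρ ≤ ‖v‖ → ψ v = 0) {s : E} {l : Λ} (hl : dist (l : E) s < ρ) :
    discreteConv Λ q ψ s = q l * ψ (s - l) :=
  tsum_eq_single l fun x hx => by
    rw [of_not_not fun h => hx (eq_of_dist_lt_of_dist_lt hsep hρr
      (dist_lt_of_ne_zero hψ h) hl), mul_zero]

theorem discreteConv_eq_zero (hψ : ∀ v, ρ ≤ ‖v‖ → ψ v = 0) {s : E}
    (hs : ∀ l : Λ, ρ ≤ dist (l : E) s) : discreteConv Λ q ψ s = 0 := by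
  simp [discreteConv, hψ _ ((hs _).trans_eq (dist_comm _ _ |>.trans (dist_eq_norm _ _)))]

theorem discreteConv_self (hsep : ∀ x y : Λ, x ≠ y → r ≤ dist (x : E) y)
    (hρr : 2 * ρ ≤ r) (hρ : 0 < ρ) (hψ0 : ψ 0 = 1) (hψ : ∀ v, ρ ≤ ‖v‖ → ψ v = 0) (l : Λ) :
    discreteConv Λ q ψ l = q l := by
  rw [discreteConv_eq_of_dist_lt hsep hρr hψ (l := l) (by simpa using hρ), sub_self, hψ0, mul_one]

theorem norm_discreteConv_le (hsep : ∀ x y : Λ, x ≠ y → r ≤ dist (x : E) y)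
    (hρr : 2 * ρ ≤ r) (hψ1 : ∀ v, ‖ψ v‖ ≤ 1) (hψ : ∀ v, ρ ≤ ‖v‖ → ψ v = 0) {s : E} {l : Λ}
    (hl : dist (l : E) s < ρ) : ‖discreteConv Λ q ψ s‖ ≤ ‖q l‖ := by
  rw [discreteConv_eq_of_dist_lt hsep hρr hψ hl, norm_mul]
  exact mul_le_of_le_one_right (norm_nonneg _) (hψ1 _)

end Separated

section WeightedAlmostPeriod

variable {E : Type*} [NormedAddCommGroup E] {Λ : Set E}

def IsWeightedAlmostPeriod (Λ : Set E) (q : E → ℂ) (ρ ε : ℝ) (τ : E) : Prop :=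
  (∀ x y : Λ, dist ((x : E) + τ) y < ρ → ‖q y - q x‖ ≤ ε) ∧
  (∀ x : Λ, (∀ y : Λ, ρ ≤ dist ((x : E) + τ) y) → ‖q x‖ ≤ ε) ∧
  (∀ y : Λ, (∀ x : Λ, ρ ≤ dist ((x : E) + τ) y) → ‖q y‖ ≤ ε)

variable {p ψ : E → ℂ} {r ρ ε : ℝ} {τ : E}

theorem isWeightedAlmostPeriod_of_discreteConv (hsep : ∀ x y : Λ, x ≠ y → r ≤ dist (x : E) y)
    (hρr : 2 * ρ ≤ r) (hρ : 0 < ρ) (hψ0 : ψ 0 = 1) (hψ1 : ∀ v, ‖ψ v‖ ≤ 1)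
    (hψ : ∀ v, ρ ≤ ‖v‖ → ψ v = 0)
    (hτ : ∀ s, ‖discreteConv Λ p ψ (s + τ) - discreteConv Λ p ψ s‖ < ε) :
    IsWeightedAlmostPeriod Λ (fun x => ((‖p x‖ : ℝ) : ℂ)) ρ ε τ := by
  have hself := discreteConv_self (q := p) hsep hρr hρ hψ0 hψ
  have hfwd : ∀ x : Λ, ‖p x‖ < ‖discreteConv Λ p ψ (x + τ)‖ + ε := fun x =>
    calc ‖p x‖ = ‖discreteConv Λ p ψ x‖ := by rw [hself]
      _ ≤ ‖discreteConv Λ p ψ (x + τ)‖ + ‖discreteConv Λ p ψ (x + τ) - discreteConv Λ p ψ x‖ :=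
        norm_le_insert _ _
      _ < _ := by gcongr; exact hτ x
  have hbwd : ∀ y : Λ, ‖p y‖ < ‖discreteConv Λ p ψ (y - τ)‖ + ε := fun y =>
    calc ‖p y‖ = ‖discreteConv Λ p ψ y‖ := by rw [hself]
      _ ≤ ‖discreteConv Λ p ψ (y - τ)‖ + ‖discreteConv Λ p ψ (y - τ) - discreteConv Λ p ψ y‖ :=
        norm_le_insert _ _
      _ < _ := by
        gcongr
        simpa only [sub_add_cancel, norm_sub_rev] using hτ (y - τ)
  refine ⟨fun x y hxy => ?_, fun x hx => ?_, fun y hy => ?_⟩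
  · have hy := norm_discreteConv_le (q := p) hsep hρr hψ1 hψ (dist_comm (x + τ : E) y ▸ hxy)
    have hx := norm_discreteConv_le (q := p) hsep hρr hψ1 hψ
      ((dist_sub_eq_dist_add_right (x : E) y τ).trans_lt hxy)
    rw [← ofReal_sub, norm_real, Real.norm_eq_abs, abs_le]
    constructor <;> linarith [hfwd x, hbwd y]
  · have h := hfwd x
    rw [discreteConv_eq_zero hψ fun l => (dist_comm (l : E) _).trans_ge (hx l), norm_zero] at h
    simpa using h.le
  · have h := hbwd y
    rw [discreteConv_eq_zero hψ fun l => (dist_sub_eq_dist_add_right (l : E) y τ).trans_ge (hy l),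
      norm_zero] at h
    simpa using h.le

end WeightedAlmostPeriod

section Matching

variable {E : Type*} [NormedAddCommGroup E] {Λ : Set E} {q φ : E → ℂ} {r ρ M B C ε δ : ℝ}
  {τ t : E}

theorem norm_sum_partner_sub_le (hsep : ∀ x y : Λ, x ≠ y → r ≤ dist (x : E) y)
    (hρr : 2 * ρ ≤ r) (hφ : ∀ v, M ≤ ‖v‖ → φ v = 0) (hC : ∀ v, ‖φ v‖ ≤ C)
    (hδ : ∀ u v, dist u v < ρ → dist (φ u) (φ v) ≤ δ) (hδ0 : 0 ≤ δ) (hB : ∀ x : Λ, ‖q x‖ ≤ B)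
    (hτ : IsWeightedAlmostPeriod Λ q ρ ε τ) {A' : Finset Λ}
    (hA' : ∀ y : Λ, dist (y : E) (t + τ) < M + ρ → y ∈ A') (x : Λ) :
    ‖∑ y ∈ A'.filter fun y : Λ => dist ((x : E) + τ) y < ρ, q y * φ (t + τ - y) - q x * φ (t - x)‖ ≤
      B * δ + ε * C := by
  by_cases hpartner : ∃ y : Λ, dist ((x : E) + τ) y < ρ
  · obtain ⟨y₀, hy₀⟩ := hpartner
    have hsum : ∑ y ∈ A'.filter fun y : Λ => dist ((x : E) + τ) y < ρ, q y * φ (t + τ - y) =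
        q y₀ * φ (t + τ - y₀) := by
      refine Finset.sum_eq_single y₀ (fun y hy hne => (hne ?_).elim) fun hy₀A' => ?_
      · exact eq_of_dist_lt_of_dist_lt hsep hρr (c := x + τ)
          (dist_comm (y : E) _ ▸ (Finset.mem_filter.1 hy).2) (dist_comm (y₀ : E) _ ▸ hy₀)
      · have hfar : φ (t + τ - y₀) = 0 := by
          by_contra h
          refine hy₀A' (Finset.mem_filter.2 ⟨hA' y₀ ?_, hy₀⟩)
          linarith [dist_lt_of_ne_zero hφ h, dist_nonneg.trans_lt hy₀]
        rw [hfar, mul_zero]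
    have hclose : dist (t + τ - y₀) (t - x) < ρ := by
      rwa [dist_eq_norm, show t + τ - y₀ - (t - x) = (x : E) + τ - y₀ by abel, ← dist_eq_norm]
    rw [hsum, show q y₀ * φ (t + τ - y₀) - q x * φ (t - x) =
      q y₀ * (φ (t + τ - y₀) - φ (t - x)) + (q y₀ - q x) * φ (t - x) by ring]
    refine (norm_add_le _ _).trans ?_
    rw [norm_mul, norm_mul]
    gcongr
    · exact (norm_nonneg _).trans (hB y₀)
    · exact hB y₀
    · exact dist_eq_norm (φ _) _ ▸ hδ _ _ hclose
    · exact (norm_nonneg _).trans (hτ.1 x y₀ hy₀)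
    · exact hτ.1 x y₀ hy₀
    · exact hC _
  · simp only [not_exists, not_lt] at hpartner
    rw [Finset.sum_eq_zero fun y hy => absurd (Finset.mem_filter.1 hy).2 (hpartner y).not_gt,
      zero_sub, norm_neg, norm_mul]
    have hx := hτ.2.1 x hpartner
    have hBδ : 0 ≤ B * δ := mul_nonneg ((norm_nonneg _).trans (hB x)) hδ0
    nlinarith [mul_le_mul hx (hC (t - x)) (norm_nonneg _) ((norm_nonneg _).trans hx)]

theorem norm_sub_sum_partner_le (hsep : ∀ x y : Λ, x ≠ y → r ≤ dist (x : E) y)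
    (hρr : 2 * ρ ≤ r) (hφ : ∀ v, M ≤ ‖v‖ → φ v = 0) (hC : ∀ v, ‖φ v‖ ≤ C) (hε : 0 ≤ ε)
    (hτ : IsWeightedAlmostPeriod Λ q ρ ε τ) {A : Finset Λ}
    (hA : ∀ x : Λ, dist (x : E) t < M + ρ → x ∈ A) (y : Λ) :
    ‖q y * φ (t + τ - y) - ∑ _x ∈ A.filter fun x : Λ => dist ((x : E) + τ) y < ρ,
      q y * φ (t + τ - y)‖ ≤ ε * C := by
  have hεC : 0 ≤ ε * C := mul_nonneg hε ((norm_nonneg _).trans (hC 0))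
  by_cases hpartner : ∃ x : Λ, dist ((x : E) + τ) y < ρ
  · obtain ⟨x₀, hx₀⟩ := hpartner
    by_cases hfar : φ (t + τ - y) = 0
    · simpa [hfar] using hεC
    have hx₀A : x₀ ∈ A := hA x₀ <| by
      linarith [dist_add_right (x₀ : E) t τ, dist_triangle ((x₀ : E) + τ) y (t + τ),
        dist_lt_of_ne_zero hφ hfar]
    rw [Finset.sum_eq_single_of_mem x₀ (Finset.mem_filter.2 ⟨hx₀A, hx₀⟩) fun x hx hne =>
      (hne (eq_of_dist_lt_of_dist_lt hsep hρr (c := y - τ)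
        ((dist_sub_eq_dist_add_right (x : E) y τ).trans_lt (Finset.mem_filter.1 hx).2)
        ((dist_sub_eq_dist_add_right (x₀ : E) y τ).trans_lt hx₀))).elim, sub_self, norm_zero]
    exact hεC
  · simp only [not_exists, not_lt] at hpartner
    rw [Finset.sum_eq_zero fun x hx => absurd (Finset.mem_filter.1 hx).2 (hpartner x).not_gt,
      sub_zero, norm_mul]
    exact mul_le_mul (hτ.2.2 y hpartner) (hC _) (norm_nonneg _) hε

theorem norm_discreteConv_add_sub_le (hsep : ∀ x y : Λ, x ≠ y → r ≤ dist (x : E) y)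
    (hρr : 2 * ρ ≤ r) (hρ : 0 < ρ) (hfin : ∀ c R, (Λ ∩ ball c R).Finite) {N : ℕ}
    (hN : ∀ (c : E) (A : Finset Λ), (∀ x ∈ A, dist (x : E) c < M + ρ) → A.card ≤ N)
    (hφ : ∀ v, M ≤ ‖v‖ → φ v = 0) (hC : ∀ v, ‖φ v‖ ≤ C)
    (hδ : ∀ u v, dist u v < ρ → dist (φ u) (φ v) ≤ δ) (hδ0 : 0 ≤ δ) (hB : ∀ x : Λ, ‖q x‖ ≤ B)
    (hB0 : 0 ≤ B) (hε : 0 ≤ ε) (hτ : IsWeightedAlmostPeriod Λ q ρ ε τ) (t : E) :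
    ‖discreteConv Λ q φ (t + τ) - discreteConv Λ q φ t‖ ≤ N * (B * δ + ε * C) + N * (ε * C) := by
  obtain ⟨A, hA⟩ := exists_finset_iff_dist_lt hfin t (M + ρ)
  obtain ⟨A', hA'⟩ := exists_finset_iff_dist_lt hfin (t + τ) (M + ρ)
  rw [discreteConv_eq_sum hφ A' fun y hy => (hA' y).2 (by linarith),
    discreteConv_eq_sum hφ A fun x hx => (hA x).2 (by linarith)]
  -- pair off the terms of the two sums along the partial matching `x ↦ y`, `‖x + τ - y‖ < ρ`
  have hswap : ∑ x ∈ A, ∑ y ∈ A'.filter (fun y : Λ => dist ((x : E) + τ) y < ρ),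
        q y * φ (t + τ - y) =
      ∑ y ∈ A', ∑ _x ∈ A.filter (fun x : Λ => dist ((x : E) + τ) y < ρ), q y * φ (t + τ - y) := by
    simp only [Finset.sum_filter]
    exact Finset.sum_comm
  have hC0 : 0 ≤ C := (norm_nonneg _).trans (hC 0)
  calc _ = ‖∑ x ∈ A, (∑ y ∈ A'.filter (fun y : Λ => dist ((x : E) + τ) y < ρ),
          q y * φ (t + τ - y) - q x * φ (t - x)) +
        ∑ y ∈ A', (q y * φ (t + τ - y) - ∑ _x ∈ A.filter (fun x : Λ => dist ((x : E) + τ) y < ρ),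
          q y * φ (t + τ - y))‖ := by
        rw [Finset.sum_sub_distrib, Finset.sum_sub_distrib, hswap]
        abel_nf
    _ ≤ ∑ _x ∈ A, (B * δ + ε * C) + ∑ _y ∈ A', ε * C :=
        (norm_add_le _ _).trans <| add_le_add
          (norm_sum_le_of_le _ fun x _ =>
            norm_sum_partner_sub_le hsep hρr hφ hC hδ hδ0 hB hτ (fun y hy => (hA' y).2 hy) x)
          (norm_sum_le_of_le _ fun y _ =>
            norm_sub_sum_partner_le hsep hρr hφ hC hε hτ (fun x hx => (hA x).2 hx) y)
    _ = A.card * (B * δ + ε * C) + A'.card * (ε * C) := by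
        simp only [Finset.sum_const, nsmul_eq_mul]
    _ ≤ N * (B * δ + ε * C) + N * (ε * C) := by
        gcongr
        · exact hN t A fun x hx => (hA x).1 hx
        · exact hN (t + τ) A' fun y hy => (hA' y).1 hy

end Matching

theorem exists_norm_le_of_apMeasure {d : ℕ} {Λ : Set (Ed d)} {p : Ed d → ℂ} {r : ℝ} (hr : 0 < r)
    (hsep : ∀ x y : Λ, x ≠ y → r ≤ dist (x : Ed d) y) (hap : APMeasure Λ p) :
    ∃ B, 0 ≤ B ∧ ∀ x : Λ, ‖p x‖ ≤ B := by
  obtain ⟨ψ, hψ, hψc, hψ0, -, hψρ⟩ := exists_complex_bump (E := Ed d) (half_pos hr)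
  obtain ⟨B, hB⟩ := (hap ψ hψ hψc).exists_norm_le
  refine ⟨B, (norm_nonneg _).trans (hB 0), fun x => ?_⟩
  calc ‖p x‖ = ‖discreteConv Λ p ψ x‖ := by
        rw [discreteConv_self hsep (by linarith) (half_pos hr) hψ0 hψρ]
    _ ≤ B := hB x

end Paper

theorem statement9_general (d : ℕ) (Λ : Set (Ed d)) (p : Ed d → ℂ)
    (hΛ : IsUniformlyDiscrete Λ)
    (hap : APMeasure Λ p) :
    APMeasure Λ (fun l => ((‖p l‖ : ℝ) : ℂ)) := by
  obtain ⟨r, hr, hsep⟩ := hΛ.exists_separated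
  obtain ⟨B, hB0, hB⟩ := exists_norm_le_of_apMeasure hr hsep hap
  intro φ hφ hφc
  show APFun (discreteConv Λ (fun l => ((‖p l‖ : ℝ) : ℂ)) φ)
  obtain ⟨M, -, hM⟩ := hφc.exists_pos_le_norm
  obtain ⟨C, hC⟩ := hφ.continuous.bounded_above_of_compact_support hφc
  obtain ⟨N, hN⟩ := exists_card_le_of_separated hr hsep (M + r)
  refine ⟨continuous_discreteConv hΛ.1 hφ.continuous hM, fun ε hε => ?_⟩
  set ε' := ε / (N * (B + 2 * C) + 1)
  have hC0 : 0 ≤ C := (norm_nonneg _).trans (hC 0)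
  have hε' : 0 < ε' := by positivity
  obtain ⟨δ, hδ, hφδ⟩ := Metric.uniformContinuous_iff.mp
    (hφc.uniformContinuous_of_continuous hφ.continuous) ε' hε'
  set ρ := min δ (r / 2)
  have hρ : 0 < ρ := by positivity
  have hρr : 2 * ρ ≤ r := by linarith [min_le_right δ (r / 2)]
  obtain ⟨ψ, hψ, hψc, hψ0, hψ1, hψρ⟩ := exists_complex_bump (E := Ed d) hρ
  refine ((hap ψ hψ hψc).2 ε' hε').mono fun τ hτ t => ?_
  have hτ' := isWeightedAlmostPeriod_of_discreteConv hsep hρr hρ hψ0 hψ1 hψρ hτ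
  calc _ ≤ N * (B * ε' + ε' * C) + N * (ε' * C) :=
        norm_discreteConv_add_sub_le hsep hρr hρ hΛ.1
          (fun c A hA => hN c A fun x hx => (hA x hx).trans_le (by linarith))
          hM hC (fun u v huv => (hφδ (huv.trans_le (min_le_left _ _))).le) hε'.le
          (fun x => by simpa using hB x) hB0 hε'.le hτ' t
    _ = ε' * (N * (B + 2 * C)) := by ring
    _ < ε := by
        rw [div_mul_eq_mul_div, div_lt_iff₀ (by positivity)]
        nlinarith

/-- Proposition 2 ii): if `μ = Σ_{λ∈Λ} p(λ) δ_λ` is an almost periodic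
measure with uniformly discrete support, then `|μ| = Σ_{λ∈Λ} |p(λ)| δ_λ` is almost
periodic as well. -/
theorem statement9 (d : ℕ) (Λ : Set (Ed d)) (p : Ed d → ℂ)
    (hΛ : IsUniformlyDiscrete Λ)
    (hsupp : ∀ l : Ed d, l ∉ Λ → p l = 0)
    (hap : APMeasure Λ p) :
    APMeasure Λ (fun l => ((‖p l‖ : ℝ) : ℂ)) :=
  statement9_general d Λ p hΛ hap

end
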